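/- The projection v : A ⊔| B → B from the equivalence fusion, sending an object x to Sx if x ∈ A and to x if x ∈ B, and a morphism f to Sf if both endpoints lie in A and to f otherwise, is a functor. -/

import Mathlib

open CategoryTheory

universe v u u'

variable {A : Type u} {B : Type u'} [Category.{v} A] [Category.{v} B]

/-- Hom-sets of the equivalence fusion `A ⊔| B` of an adjoint equivalence
`e = ⟨S, T, η, ε⟩` between `A` and `B`.  Objects are `A ⊕ B`; in the mixed
cases the hom-sets are `B(Sx, y)` and `B(x, Sy)`. -/
def FusionHom (e : A ≌ B) : A ⊕ B → A ⊕ B → Type v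
  | .inl x, .inl y => x ⟶ y
  | .inr x, .inr y => x ⟶ y
  | .inl x, .inr y => e.functor.obj x ⟶ y
  | .inr x, .inl y => x ⟶ e.functor.obj y

/-- Identities of the equivalence fusion. -/
def fusionId (e : A ≌ B) : ∀ x : A ⊕ B, FusionHom e x x
  | .inl x => 𝟙 x
  | .inr x => 𝟙 x

/-- Composition of the equivalence fusion, written in diagrammatic order:
`fusionComp e x y z f g` is the composite `g ∘ f` of the paper.  In the mixed case
`x ∈ A, y ∈ B, z ∈ A` it is the conjugation `η_z⁻¹ ∘ Tg ∘ Tf ∘ η_x`. -/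
def fusionComp (e : A ≌ B) :
    ∀ (x y z : A ⊕ B), FusionHom e x y → FusionHom e y z → FusionHom e x z
  | .inl _, .inl _, .inl _, f, g => f ≫ g
  | .inl _, .inl _, .inr _, f, g => e.functor.map f ≫ g
  | .inl x, .inr _, .inl z, f, g =>
      e.unitIso.hom.app x ≫ e.inverse.map f ≫ e.inverse.map g ≫ e.unitIso.inv.app z
  | .inl _, .inr _, .inr _, f, g => f ≫ g
  | .inr _, .inl _, .inl _, f, g => f ≫ e.functor.map g
  | .inr _, .inl _, .inr _, f, g => f ≫ g
  | .inr _, .inr _, .inl _, f, g => f ≫ g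
  | .inr _, .inr _, .inr _, f, g => f ≫ g

/-- The object part of the projection `u : A ⊔| B → A`. -/
def fusionProjUObj (e : A ≌ B) : A ⊕ B → A
  | .inl x => x
  | .inr x => e.inverse.obj x

/-- The morphism part of the projection `u : A ⊔| B → A`:
`f ↦ f`, `Tf`, `Tf ∘ η_x`, or `η_y⁻¹ ∘ Tf` in the four cases. -/
def fusionProjUMap (e : A ≌ B) :
    ∀ (x y : A ⊕ B), FusionHom e x y → (fusionProjUObj e x ⟶ fusionProjUObj e y)
  | .inl _, .inl _, f => f
  | .inr _, .inr _, f => e.inverse.map f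
  | .inl x, .inr _, f => e.unitIso.hom.app x ≫ e.inverse.map f
  | .inr _, .inl y, f => e.inverse.map f ≫ e.unitIso.inv.app y

/-- The object part of the projection `v : A ⊔| B → B`. -/
def fusionProjVObj (e : A ≌ B) : A ⊕ B → B
  | .inl x => e.functor.obj x
  | .inr x => x

/-- The morphism part of the projection `v : A ⊔| B → B`:
`Sf` if both endpoints lie in `A`, and `f` otherwise. -/
def fusionProjVMap (e : A ≌ B) :
    ∀ (x y : A ⊕ B), FusionHom e x y → (fusionProjVObj e x ⟶ fusionProjVObj e y)
  | .inl _, .inl _, f => e.functor.map f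
  | .inl _, .inr _, f => f
  | .inr _, .inl _, f => f
  | .inr _, .inr _, f => f

/- Every other composite of the fusion is computed in `A` or `B`, where `v` is `S` or the
identity; this one is the preimage of `g ∘ f` under the fully faithful `S`, so `S` returns `g ∘ f`. -/
lemma fusionComp_inl_inr_inl (e : A ≌ B) {x : A} {y : B} {z : A}
    (f : e.functor.obj x ⟶ y) (g : y ⟶ e.functor.obj z) :
    fusionComp e (.inl x) (.inr y) (.inl z) f g = e.fullyFaithfulFunctor.preimage (f ≫ g) := by
  change _ = e.unitIso.hom.app x ≫ e.inverse.map (f ≫ g) ≫ e.unitIso.inv.app z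
  simp [fusionComp]

/-- the projection `v : A ⊔| B → B` is a functor: it preserves
identities and composition. -/
theorem fusionProjV_functor (e : A ≌ B) :
    (∀ x : A ⊕ B, fusionProjVMap e x x (fusionId e x) = 𝟙 (fusionProjVObj e x)) ∧
    (∀ (x y z : A ⊕ B) (f : FusionHom e x y) (g : FusionHom e y z),
      fusionProjVMap e x z (fusionComp e x y z f g) =
        fusionProjVMap e x y f ≫ fusionProjVMap e y z g) := by
  refine ⟨?_, ?_⟩
  · rintro (x | x)
    exacts [e.functor.map_id x, rfl]
  · rintro (x | x) (y | y) (z | z) f g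
    case inl.inl.inl => exact e.functor.map_comp (X := x) (Y := y) (Z := z) f g
    case inl.inr.inl =>
      exact (congrArg e.functor.map (fusionComp_inl_inr_inl e f g)).trans
        (e.fullyFaithfulFunctor.map_preimage (f ≫ g))
    all_goals rfl
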